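/- arXiv:1903.00250 — 5 statements merged into one kernel-verified Lean document; each statement's English description precedes it below -/
import Mathlib

section
/- For every integer p ≥ 1 and real x with |x| < 1, the power series expansion of 1/((1-x)^2 (1-x^p)) has k-th coefficient b_k = (k + 1 - (p/2)·⌊k/p⌋)·(⌊k/p⌋ + 1). -/
/-!
Shifting `k` by `p` raises `⌊k/p⌋` by one, so `b p (k + p) = b p k + (k + p + 1)`, while
`b p k = k + 1` for `k < p`. Hence the sum `S` of the absolutely convergent series
`∑ b p k x ^ k` (note `0 ≤ b p k ≤ (k + 1)²`) satisfies `S = x ^ p S + ∑ (k + 1) x ^ k`,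
i.e. `(1 - x ^ p) S = 1 / (1 - x)²`.
-/

open Finset

/-- The coefficient `b_k = (k + 1 - (p/2)⌊k/p⌋)(⌊k/p⌋ + 1)` as a real number,
    where `⌊k/p⌋` is natural division. -/
noncomputable def b (p k : ℕ) : ℝ :=
  ((k : ℝ) + 1 - (p : ℝ) / 2 * ((k / p : ℕ) : ℝ)) * (((k / p : ℕ) : ℝ) + 1)

theorem Summable.hasSum_div_one_sub_of_shift_eq {K : Type*} [Field K] [TopologicalSpace K]
    [IsTopologicalRing K] [T2Space K] {c f : ℕ → K} {a y : K} {p : ℕ} (hc : Summable c)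
    (hf : HasSum f a) (hlow : ∀ n < p, c n = f n) (hshift : ∀ n, c (n + p) = y * c n + f (n + p))
    (hy : y ≠ 1) : HasSum c (a / (1 - y)) := by
  obtain ⟨s, hs⟩ := hc
  have hhead : ∑ i ∈ range p, c i = ∑ i ∈ range p, f i :=
    sum_congr rfl fun i hi => hlow i (mem_range.mp hi)
  have htail : HasSum (fun n => c (n + p)) (y * s + (a - ∑ i ∈ range p, f i)) := by
    simp_rw [hshift]
    exact (hs.mul_left y).add ((hasSum_nat_add_iff' p).mpr hf)
  have hs_eq := ((hasSum_nat_add_iff' p).mpr hs).unique htail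
  rw [hhead] at hs_eq
  convert hs
  rw [div_eq_iff (sub_ne_zero.mpr hy.symm)]
  linear_combination -hs_eq

theorem hasSum_succ_mul_geometric {𝕜 : Type*} [NormedField 𝕜] [CompleteSpace 𝕜] {r : 𝕜}
    (hr : ‖r‖ < 1) : HasSum (fun n : ℕ => ((n : 𝕜) + 1) * r ^ n) (1 / (1 - r) ^ 2) := by
  simpa using hasSum_choose_mul_geometric_of_norm_lt_one 1 hr

theorem summable_succ_sq_mul_geometric {𝕜 : Type*} [NormedField 𝕜] [CompleteSpace 𝕜] {r : 𝕜}
    (hr : ‖r‖ < 1) : Summable (fun n : ℕ => ((n : 𝕜) + 1) ^ 2 * r ^ n) := by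
  have h := ((summable_pow_mul_geometric_of_norm_lt_one 2 hr).add
    ((summable_pow_mul_geometric_of_norm_lt_one 1 hr).mul_left 2)).add
    (summable_geometric_of_norm_lt_one hr)
  exact h.congr fun n => by ring

theorem b_of_lt {p k : ℕ} (hk : k < p) : b p k = k + 1 := by
  simp [b, Nat.div_eq_of_lt hk]

theorem b_add_self {p : ℕ} (hp : 0 < p) (k : ℕ) : b p (k + p) = b p k + (k + p + 1) := by
  simp only [b, Nat.add_div_right k hp]
  push_cast
  ring

theorem b_nonneg (p k : ℕ) : 0 ≤ b p k := by
  have hle : ((p * (k / p) : ℕ) : ℝ) ≤ k := by exact_mod_cast Nat.mul_div_le k p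
  push_cast at hle
  exact mul_nonneg (by linarith) (by positivity)

theorem b_le_succ_sq (p k : ℕ) : b p k ≤ ((k : ℝ) + 1) ^ 2 := by
  have hq : ((k / p : ℕ) : ℝ) + 1 ≤ k + 1 := by gcongr; exact Nat.div_le_self k p
  have hfirst : (k : ℝ) + 1 - p / 2 * (k / p : ℕ) ≤ k + 1 := by
    have : (0 : ℝ) ≤ p / 2 * (k / p : ℕ) := by positivity
    linarith
  rw [sq]
  exact mul_le_mul hfirst hq (by positivity) (by positivity)

theorem series_expansion (p : ℕ) (hp : 1 ≤ p) (x : ℝ) (hx : |x| < 1) :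
    HasSum (fun k : ℕ => b p k * x ^ k) (1 / ((1 - x) ^ 2 * (1 - x ^ p))) := by
  have hx' : ‖x‖ < 1 := by rwa [Real.norm_eq_abs]
  have hsummable : Summable (fun k : ℕ => b p k * x ^ k) := by
    refine Summable.of_norm_bounded (summable_succ_sq_mul_geometric (r := |x|) (by simpa)) ?_
    intro k
    rw [norm_mul, norm_pow, Real.norm_eq_abs, abs_of_nonneg (b_nonneg p k)]
    exact mul_le_mul_of_nonneg_right (b_le_succ_sq p k) (by positivity)
  have hxp : x ^ p ≠ 1 := fun h => by
    have := pow_lt_one₀ (abs_nonneg x) hx (by omega : p ≠ 0)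
    rw [← abs_pow, h, abs_one] at this
    exact lt_irrefl 1 this
  rw [← div_div]
  refine hsummable.hasSum_div_one_sub_of_shift_eq (hasSum_succ_mul_geometric hx')
    (fun k hk => by rw [b_of_lt hk]) (fun k => ?_) hxp
  rw [b_add_self hp]
  push_cast
  ring
end

section
/- Σ_{k≥0} (k + 1 - (3/2)⌊k/3⌋)(⌊k/3⌋ + 1) / ((k+1)(k+2)(k+3)(k+4)) = π/(18√3). -/
/-!
Grouping the terms in blocks `k = 3m, 3m + 1, 3m + 2`, on which `⌊k/3⌋ = m` is constant, the
partial sum up to `3N` is `(1/6) Σ_{m<N} (1/(3m+1) - 1/(3m+2))` plus a correction that is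
`O(1/N)`. Summing the geometric series under the integral sign,
`Σ (1/(3m+1) - 1/(3m+2)) = ∫₀¹ (1 - x)/(1 - x³) dx = ∫₀¹ dx/(1 + x + x²) = π/(3√3)`,
which gives `π/(18√3)`.
-/

open Real Filter Topology Finset intervalIntegral

lemma hasSum_of_nonneg_of_tendsto_sum_range_mul {f : ℕ → ℝ} (hf : ∀ n, 0 ≤ f n) {k : ℕ}
    (hk : 0 < k) {s : ℝ} (h : Tendsto (fun N => ∑ i ∈ range (k * N), f i) atTop (𝓝 s)) :
    HasSum f s := by
  have hmono : Monotone fun n => ∑ i ∈ range n, f i := fun m n hmn =>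
    sum_le_sum_of_subset_of_nonneg (range_mono hmn) fun i _ _ => hf i
  have hmul : Monotone fun N : ℕ => k * N := fun _ _ h => Nat.mul_le_mul_left k h
  have hsummable : Summable f := summable_of_sum_range_le hf fun n =>
    (hmono (Nat.le_mul_of_pos_left n hk)).trans ((hmono.comp hmul).ge_of_tendsto h n)
  have hφ : Tendsto (fun N : ℕ => k * N) atTop atTop :=
    hmul.tendsto_atTop_atTop fun b => ⟨b, Nat.le_mul_of_pos_left b hk⟩
  exact tendsto_nhds_unique (hsummable.hasSum.tendsto_sum_nat.comp hφ) h ▸ hsummable.hasSum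

lemma tendsto_const_div_mul_natCast_add (a b c : ℝ) (hb : 0 < b) :
    Tendsto (fun N : ℕ => a / (b * N + c)) atTop (𝓝 0) :=
  tendsto_const_nhds.div_atTop
    (tendsto_atTop_add_const_right _ c (tendsto_natCast_atTop_atTop.const_mul_atTop hb))

lemma one_add_add_sq_pos (x : ℝ) : 0 < 1 + x + x ^ 2 := by
  nlinarith [sq_nonneg (x + 1), sq_nonneg x]

lemma integral_one_div_one_add_add_sq :
    ∫ x in (0 : ℝ)..1, 1 / (1 + x + x ^ 2) = π / (3 * √3) := by
  have hs : 0 < √3 := by positivity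
  have h3 : √3 ^ 2 = 3 := sq_sqrt (by norm_num)
  -- complete the square: `1 + x + x² = (3/4) (1 + u²)` with `u = (2x + 1)/√3`
  have hsub (x : ℝ) :
      1 / (1 + x + x ^ 2) = 4 / 3 * (1 / (1 + (2 / √3 * x + 1 / √3) ^ 2)) := by
    have := one_add_add_sq_pos x
    field_simp
    rw [h3]; ring
  have hπ3 : arctan √3 = π / 3 := by
    rw [← tan_pi_div_three, arctan_tan] <;> linarith [pi_pos]
  have hπ6 : arctan (√3)⁻¹ = π / 6 := by
    rw [arctan_inv_of_pos hs, hπ3]; ring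
  have e1 : 2 / √3 * 1 + 1 / √3 = √3 := by field_simp; rw [h3]; norm_num
  have e0 : 2 / √3 * 0 + 1 / √3 = (√3)⁻¹ := by ring
  simp_rw [hsub, integral_const_mul, integral_comp_mul_add (fun u => 1 / (1 + u ^ 2))
    (by positivity : 2 / √3 ≠ 0), integral_one_div_one_add_sq, e1, e0, hπ3, hπ6]
  rw [smul_eq_mul]
  field_simp
  rw [h3]
  norm_num

lemma integral_pow_sub_pow_succ (n : ℕ) :
    ∫ x in (0 : ℝ)..1, (x ^ n - x ^ (n + 1)) = 1 / (n + 1) - 1 / (n + 2) := by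
  rw [integral_sub (intervalIntegrable_pow _) (intervalIntegrable_pow _), integral_pow,
    integral_pow]
  push_cast
  ring

lemma sum_pow_three_mul_sub_pow_succ (x : ℝ) (N : ℕ) :
    ∑ m ∈ range N, (x ^ (3 * m) - x ^ (3 * m + 1)) = (1 - x ^ (3 * N)) / (1 + x + x ^ 2) := by
  rw [eq_div_iff (one_add_add_sq_pos x).ne']
  induction N with
  | zero => simp
  | succ n ih => rw [sum_range_succ, add_mul, ih]; ring

lemma intervalIntegrable_pow_div_one_add_add_sq (n : ℕ) (a b : ℝ) :
    IntervalIntegrable (fun x : ℝ => x ^ n / (1 + x + x ^ 2)) MeasureTheory.volume a b :=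
  ((continuous_pow n).div (by fun_prop) fun x => (one_add_add_sq_pos x).ne').intervalIntegrable a b

lemma integral_pow_div_one_add_add_sq_mem_Icc (n : ℕ) :
    ∫ x in (0 : ℝ)..1, x ^ n / (1 + x + x ^ 2) ∈ Set.Icc 0 (1 / ((n : ℝ) + 1)) := by
  constructor
  · refine integral_nonneg zero_le_one fun x hx => ?_
    have := one_add_add_sq_pos x
    have := pow_nonneg hx.1 n
    positivity
  · calc ∫ x in (0 : ℝ)..1, x ^ n / (1 + x + x ^ 2)
        ≤ ∫ x in (0 : ℝ)..1, x ^ n := by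
          refine integral_mono_on zero_le_one
            (intervalIntegrable_pow_div_one_add_add_sq n 0 1) (intervalIntegrable_pow _)
            fun x hx => ?_
          exact div_le_self (pow_nonneg hx.1 n) (by nlinarith [hx.1])
      _ = 1 / (n + 1) := by simp [integral_pow]

lemma tendsto_integral_pow_div_one_add_add_sq :
    Tendsto (fun n : ℕ => ∫ x in (0 : ℝ)..1, x ^ n / (1 + x + x ^ 2)) atTop (𝓝 0) :=
  squeeze_zero (fun n => (integral_pow_div_one_add_add_sq_mem_Icc n).1)
    (fun n => (integral_pow_div_one_add_add_sq_mem_Icc n).2)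
    tendsto_one_div_add_atTop_nhds_zero_nat

lemma hasSum_one_div_three_mul_add_one_sub_one_div_three_mul_add_two :
    HasSum (fun m : ℕ => 1 / (3 * (m : ℝ) + 1) - 1 / (3 * m + 2)) (π / (3 * √3)) := by
  have hpartial (N : ℕ) : ∑ m ∈ range N, (1 / (3 * (m : ℝ) + 1) - 1 / (3 * m + 2)) =
      π / (3 * √3) - ∫ x in (0 : ℝ)..1, x ^ (3 * N) / (1 + x + x ^ 2) := by
    calc ∑ m ∈ range N, (1 / (3 * (m : ℝ) + 1) - 1 / (3 * m + 2))
        = ∑ m ∈ range N, ∫ x in (0 : ℝ)..1, (x ^ (3 * m) - x ^ (3 * m + 1)) := by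
          refine sum_congr rfl fun m _ => ?_
          rw [integral_pow_sub_pow_succ]
          push_cast
          ring
      _ = ∫ x in (0 : ℝ)..1, (1 - x ^ (3 * N)) / (1 + x + x ^ 2) := by
          rw [← integral_finsetSum fun m _ =>
            (intervalIntegrable_pow _).sub (intervalIntegrable_pow _)]
          simp_rw [sum_pow_three_mul_sub_pow_succ]
      _ = π / (3 * √3) - ∫ x in (0 : ℝ)..1, x ^ (3 * N) / (1 + x + x ^ 2) := by
          simp_rw [sub_div]
          rw [integral_sub (by simpa using intervalIntegrable_pow_div_one_add_add_sq 0 0 1)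
            (intervalIntegrable_pow_div_one_add_add_sq _ 0 1), integral_one_div_one_add_add_sq]
  have hnonneg (m : ℕ) : 0 ≤ 1 / (3 * (m : ℝ) + 1) - 1 / (3 * m + 2) :=
    sub_nonneg.2 (one_div_le_one_div_of_le (by positivity) (by linarith))
  rw [hasSum_iff_tendsto_nat_of_nonneg hnonneg]
  simp_rw [hpartial]
  simpa using tendsto_const_nhds.sub
    (tendsto_integral_pow_div_one_add_add_sq.comp (tendsto_id.const_mul_atTop' three_pos))

noncomputable def seriesTerm (k : ℕ) : ℝ :=
  (((k : ℝ) + 1 - 3 / 2 * ((k / 3 : ℕ) : ℝ)) * (((k / 3 : ℕ) : ℝ) + 1)) /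
    (((k : ℝ) + 1) * ((k : ℝ) + 2) * ((k : ℝ) + 3) * ((k : ℝ) + 4))

lemma seriesTerm_nonneg (k : ℕ) : 0 ≤ seriesTerm k := by
  have hk : 3 * ((k / 3 : ℕ) : ℝ) ≤ k := by exact_mod_cast Nat.mul_div_le k 3
  unfold seriesTerm
  apply div_nonneg
  · apply mul_nonneg <;> linarith [(k / 3 : ℕ).cast_nonneg (α := ℝ)]
  · positivity

lemma sum_range_three_mul_seriesTerm (N : ℕ) :
    ∑ k ∈ range (3 * N), seriesTerm k =
      (∑ m ∈ range N, (1 / (3 * (m : ℝ) + 1) - 1 / (3 * m + 2))) / 6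
        + 1 / (27 * N + 9) - 2 / (27 * N + 18) := by
  induction N with
  | zero => norm_num
  | succ n ih =>
    rw [show 3 * (n + 1) = 3 * n + 1 + 1 + 1 by ring, sum_range_succ, sum_range_succ,
      sum_range_succ, ih, sum_range_succ]
    simp only [seriesTerm, show (3 * n) / 3 = n by omega, show (3 * n + 1) / 3 = n by omega,
      show (3 * n + 1 + 1) / 3 = n by omega]
    push_cast
    field_simp
    ring

theorem series_p3 :
    (∑' k : ℕ,
        (((k : ℝ) + 1 - 3 / 2 * ((k / 3 : ℕ) : ℝ)) * (((k / 3 : ℕ) : ℝ) + 1)) /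
          (((k : ℝ) + 1) * ((k : ℝ) + 2) * ((k : ℝ) + 3) * ((k : ℝ) + 4)))
      = π / (18 * Real.sqrt 3) := by
  refine (hasSum_of_nonneg_of_tendsto_sum_range_mul seriesTerm_nonneg three_pos ?_).tsum_eq
  simp_rw [sum_range_three_mul_seriesTerm]
  have hL := hasSum_one_div_three_mul_add_one_sub_one_div_three_mul_add_two.tendsto_sum_nat
  convert ((hL.div_const 6).add (tendsto_const_div_mul_natCast_add 1 27 9 (by norm_num))).sub
    (tendsto_const_div_mul_natCast_add 2 27 18 (by norm_num)) using 2
  field_simp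
  ring
end

section
/- Σ_{k≥0} (k + 1 - 2⌊k/4⌋)(⌊k/4⌋ + 1) / ((k+1)(k+2)(k+4)(k+5)) = π/48. -/
open Real Filter Finset Topology

noncomputable def Fp4 (k : ℕ) : ℝ :=
  (((k : ℝ) + 1 - 2 * ((k / 4 : ℕ) : ℝ)) * (((k / 4 : ℕ) : ℝ) + 1)) /
    (((k : ℝ) + 1) * ((k : ℝ) + 2) * ((k : ℝ) + 4) * ((k : ℝ) + 5))

noncomputable def Pp4 (n : ℕ) : ℝ := ∑ i ∈ Finset.range n, (-1 : ℝ) ^ i / (2 * i + 1)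

noncomputable def Gp4 (n : ℕ) : ℝ :=
  (1/16) * Pp4 (2*n+2) + (1/48) * Pp4 (2*n+1)
    - 1/(32*(4*(n:ℝ)+1)) - 1/(32*(4*(n:ℝ)+3)) - 1/(48*(2*(n:ℝ)+1))

lemma Fp4_nonneg (k : ℕ) : 0 ≤ Fp4 k := by
  unfold Fp4
  have h1 : (2 * (k/4) : ℕ) ≤ k := by omega
  have h1' : (2 : ℝ) * ((k / 4 : ℕ) : ℝ) ≤ (k : ℝ) := by exact_mod_cast h1
  apply div_nonneg
  · apply mul_nonneg
    · linarith
    · positivity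
  · positivity

lemma Pp4_succ (m : ℕ) : Pp4 (m+1) = Pp4 m + (-1:ℝ)^m/(2*(m:ℝ)+1) := by
  unfold Pp4
  rw [Finset.sum_range_succ]

set_option maxHeartbeats 2000000 in
lemma key_p4 (n : ℕ) : ∑ k ∈ Finset.range (4*n), Fp4 k = Gp4 n := by
  induction n with
  | zero => norm_num [Gp4, Pp4, Finset.sum_range_succ]
  | succ n ih =>
    have h4 : 4*(n+1) = (4*n)+1+1+1+1 := by ring
    rw [h4, Finset.sum_range_succ, Finset.sum_range_succ, Finset.sum_range_succ,
      Finset.sum_range_succ, ih]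
    have e0 : (4*n)/4 = n := by omega
    have e1 : (4*n+1)/4 = n := by omega
    have e2 : (4*n+2)/4 = n := by omega
    have e3 : (4*n+3)/4 = n := by omega
    have hA : Pp4 (2*(n+1)+2) = Pp4 (2*n+2) + 1/(4*(n:ℝ)+5) - 1/(4*(n:ℝ)+7) := by
      have h1 := Pp4_succ (2*n+2)
      have h2 := Pp4_succ (2*n+2+1)
      rw [h1] at h2
      rw [show 2*(n+1)+2 = 2*n+2+1+1 by ring, h2,
        (Even.neg_one_pow ⟨n+1, by ring⟩ : (-1:ℝ)^(2*n+2) = 1),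
        (Odd.neg_one_pow ⟨n+1, by ring⟩ : (-1:ℝ)^(2*n+2+1) = -1)]
      push_cast
      ring
    have hB : Pp4 (2*(n+1)+1) = Pp4 (2*n+1) - 1/(4*(n:ℝ)+3) + 1/(4*(n:ℝ)+5) := by
      have h1 := Pp4_succ (2*n+1)
      have h2 := Pp4_succ (2*n+1+1)
      rw [h1] at h2
      rw [show 2*(n+1)+1 = 2*n+1+1+1 by ring, h2,
        (Odd.neg_one_pow ⟨n, by ring⟩ : (-1:ℝ)^(2*n+1) = -1),
        (Even.neg_one_pow ⟨n+1, by ring⟩ : (-1:ℝ)^(2*n+1+1) = 1)]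
      push_cast
      ring
    unfold Gp4 Fp4
    rw [hA, hB, e0, e1, e2, e3]
    push_cast
    set x : ℝ := (n : ℝ) with hx
    have hx0 : (0:ℝ) ≤ x := by positivity
    have d1 : 4*x+1 ≠ 0 := by positivity
    have d2 : 4*x+2 ≠ 0 := by positivity
    have d3 : 4*x+3 ≠ 0 := by positivity
    have d4 : 4*x+4 ≠ 0 := by positivity
    have d5 : 4*x+5 ≠ 0 := by positivity
    have d6 : 4*x+6 ≠ 0 := by positivity
    have d7 : 4*x+7 ≠ 0 := by positivity
    have d8 : 4*x+8 ≠ 0 := by positivity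
    have f1 : 2*x+1 ≠ 0 := by positivity
    have f3 : 2*x+3 ≠ 0 := by positivity
    have q5 : 4*(x+1)+1 = 4*x+5 := by ring
    have q6 : 4*(x+1)+3 = 4*x+7 := by ring
    have q7 : 2*(x+1)+1 = 2*x+3 := by ring
    rw [q5, q6, q7]
    field_simp
    ring

lemma tendsto_Gp4 : Tendsto Gp4 atTop (𝓝 (π / 48)) := by
  have hP := Real.tendsto_sum_pi_div_four
  have hsub : ∀ c : ℕ, Tendsto (fun n : ℕ => 2*n+c) atTop atTop := by
    intro c
    exact tendsto_atTop_atTop.2 fun b => ⟨b, fun a ha => by omega⟩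
  have hP2 : Tendsto (fun n : ℕ => Pp4 (2*n+2)) atTop (𝓝 (π/4)) := hP.comp (hsub 2)
  have hP1 : Tendsto (fun n : ℕ => Pp4 (2*n+1)) atTop (𝓝 (π/4)) := hP.comp (hsub 1)
  have hlin : ∀ a b c : ℝ, 0 < a → 0 < b → 0 < c →
      Tendsto (fun n : ℕ => 1/(a*(b*(n:ℝ)+c))) atTop (𝓝 0) := by
    intro a b c ha hb hc
    have h1 : Tendsto (fun n : ℕ => a*(b*(n:ℝ)+c)) atTop atTop := by
      have := (tendsto_natCast_atTop_atTop (R := ℝ)).const_mul_atTop hb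
      have h2 := tendsto_atTop_add_const_right atTop c this
      exact h2.const_mul_atTop ha
    have h2 := h1.inv_tendsto_atTop
    exact h2.congr fun n => (one_div _).symm
  have t1 : Tendsto (fun n : ℕ => 1/(32*(4*(n:ℝ)+1))) atTop (𝓝 0) := hlin 32 4 1 (by norm_num) (by norm_num) (by norm_num)
  have t2 : Tendsto (fun n : ℕ => 1/(32*(4*(n:ℝ)+3))) atTop (𝓝 0) := hlin 32 4 3 (by norm_num) (by norm_num) (by norm_num)
  have t3 : Tendsto (fun n : ℕ => 1/(48*(2*(n:ℝ)+1))) atTop (𝓝 0) := hlin 48 2 1 (by norm_num) (by norm_num) (by norm_num)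
  have : Tendsto (fun n : ℕ => (1/16) * Pp4 (2*n+2) + (1/48) * Pp4 (2*n+1)
      - 1/(32*(4*(n:ℝ)+1)) - 1/(32*(4*(n:ℝ)+3)) - 1/(48*(2*(n:ℝ)+1))) atTop
      (𝓝 ((1/16)*(π/4) + (1/48)*(π/4) - 0 - 0 - 0)) :=
    ((((hP2.const_mul _).add (hP1.const_mul _)).sub t1).sub t2).sub t3
  have hval : (1/16)*(π/4) + (1/48)*(π/4) - 0 - 0 - 0 = π/48 := by ring
  rw [hval] at this
  exact this.congr fun n => rfl

theorem series_p4 :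
    (∑' k : ℕ,
        (((k : ℝ) + 1 - 2 * ((k / 4 : ℕ) : ℝ)) * (((k / 4 : ℕ) : ℝ) + 1)) /
          (((k : ℝ) + 1) * ((k : ℝ) + 2) * ((k : ℝ) + 4) * ((k : ℝ) + 5)))
      = π / 48 := by
  have hmono : Monotone (fun n : ℕ => ∑ k ∈ Finset.range n, Fp4 k) := by
    apply monotone_nat_of_le_succ
    intro n
    rw [Finset.sum_range_succ]
    have := Fp4_nonneg n
    linarith
  have hdiv : Tendsto (fun n : ℕ => n/4) atTop atTop :=
    tendsto_atTop_atTop.2 fun b => ⟨4*b+4, fun a ha => by omega⟩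
  have hdiv1 : Tendsto (fun n : ℕ => n/4 + 1) atTop atTop :=
    tendsto_atTop_atTop.2 fun b => ⟨4*b+4, fun a ha => by omega⟩
  have hS4 : Tendsto (fun n : ℕ => ∑ k ∈ Finset.range (4*n), Fp4 k) atTop (𝓝 (π/48)) := by
    have := tendsto_Gp4
    exact this.congr fun n => (key_p4 n).symm
  have hfull : Tendsto (fun n : ℕ => ∑ k ∈ Finset.range n, Fp4 k) atTop (𝓝 (π/48)) := by
    refine tendsto_of_tendsto_of_tendsto_of_le_of_le (hS4.comp hdiv) (hS4.comp hdiv1) ?_ ?_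
    · intro n; exact hmono (by omega : 4*(n/4) ≤ n)
    · intro n
      have : n ≤ 4*(n/4+1) := by omega
      exact hmono this
  have hub : ∀ n, ∑ k ∈ Finset.range n, Fp4 k ≤ π/48 := fun n => hmono.ge_of_tendsto hfull n
  have hsum : Summable Fp4 := summable_of_sum_range_le Fp4_nonneg hub
  have hhs : HasSum Fp4 (π/48) := (hsum.hasSum_iff_tendsto_nat).2 hfull
  exact hhs.tsum_eq
end

section
/- The cotangent sum c₀(1/p) = -Σ_{k=1}^{p-1}(k/p)cot(πk/p) satisfies 0 ≤ liminf_{p→∞} c₀(1/p)/p³ and limsup_{p→∞} c₀(1/p)/p³ ≤ 1/2. -/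
open Real Filter

noncomputable def c₀ (p : ℕ) : ℝ :=
  -∑ k ∈ Finset.Icc 1 (p - 1), ((k : ℝ) / p) * Real.cot (π * k / p)

lemma sin_lb_aux (p m : ℕ) (h1 : 1 ≤ m) (h2 : 2 * m ≤ p) :
    (1 : ℝ) / p ≤ Real.sin (π * m / p) := by
  have hp : (0 : ℝ) < p := by
    have : 0 < p := by omega
    exact_mod_cast this
  have hm : (1 : ℝ) ≤ m := by exact_mod_cast h1
  have h2' : 2 * (m : ℝ) ≤ p := by exact_mod_cast h2
  have hx0 : 0 ≤ π * m / p := by positivity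
  have hx1 : π * m / p ≤ π / 2 := by
    rw [div_le_div_iff₀ hp two_pos]
    nlinarith [Real.pi_pos]
  have := Real.mul_le_sin hx0 hx1
  have hpi : (0 : ℝ) < π := Real.pi_pos
  have heq : 2 / π * (π * m / p) = 2 * m / p := by field_simp
  calc (1 : ℝ) / p ≤ 2 / π * (π * m / p) := by
        rw [heq, div_le_div_iff₀ hp hp]
        nlinarith
    _ ≤ Real.sin (π * m / p) := this

lemma sin_lb (p k : ℕ) (h1 : 1 ≤ k) (h2 : k ≤ p - 1) (hp : 2 ≤ p) :
    (1 : ℝ) / p ≤ Real.sin (π * k / p) := by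
  rcases le_or_gt (2 * k) p with h | h
  · exact sin_lb_aux p k h1 h
  · have hj1 : 1 ≤ p - k := by omega
    have hj2 : 2 * (p - k) ≤ p := by omega
    have := sin_lb_aux p (p - k) hj1 hj2
    have hk : (↑(p - k) : ℝ) = p - k := by
      have : k ≤ p := by omega
      push_cast [this]; ring
    rw [hk] at this
    have hp' : (0 : ℝ) < p := by positivity
    have heq : π * ((p : ℝ) - k) / p = π - π * k / p := by
      field_simp
    rwa [heq, Real.sin_pi_sub] at this

lemma cot_bound (p k : ℕ) (h1 : 1 ≤ k) (h2 : k ≤ p - 1) (hp : 2 ≤ p) :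
    |Real.cot (π * k / p)| ≤ p := by
  have hs := sin_lb p k h1 h2 hp
  have hp' : (0 : ℝ) < p := by positivity
  have hs0 : 0 < Real.sin (π * k / p) := lt_of_lt_of_le (by positivity) hs
  rw [Real.cot_eq_cos_div_sin, abs_div, abs_of_pos hs0]
  rw [div_le_iff₀ hs0]
  calc |Real.cos (π * k / p)| ≤ 1 := Real.abs_cos_le_one _
    _ = (p : ℝ) * (1 / p) := by field_simp
    _ ≤ (p : ℝ) * Real.sin (π * k / p) := by
        exact mul_le_mul_of_nonneg_left hs (le_of_lt hp')

lemma c0_bound (p : ℕ) (hp : 2 ≤ p) : |c₀ p| ≤ (p : ℝ) ^ 2 := by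
  have hp' : (0 : ℝ) < p := by positivity
  unfold c₀
  rw [abs_neg]
  calc |∑ k ∈ Finset.Icc 1 (p - 1), ((k : ℝ) / p) * Real.cot (π * k / p)|
      ≤ ∑ k ∈ Finset.Icc 1 (p - 1), |((k : ℝ) / p) * Real.cot (π * k / p)| :=
        Finset.abs_sum_le_sum_abs _ _
    _ ≤ ∑ k ∈ Finset.Icc 1 (p - 1), (p : ℝ) := by
        apply Finset.sum_le_sum
        intro k hk
        rw [Finset.mem_Icc] at hk
        rw [abs_mul]
        have h1 : |((k : ℝ) / p)| ≤ 1 := by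
          rw [abs_of_nonneg (by positivity), div_le_one hp']
          have : k ≤ p := by omega
          exact_mod_cast this
        have h2 := cot_bound p k hk.1 hk.2 hp
        calc |((k : ℝ) / p)| * |Real.cot (π * k / p)| ≤ 1 * p :=
              mul_le_mul h1 h2 (abs_nonneg _) one_pos.le
          _ = p := one_mul _
    _ = (p - 1 : ℕ) * p := by rw [Finset.sum_const, Nat.card_Icc]; simp
    _ ≤ (p : ℝ) ^ 2 := by
        have : ((p - 1 : ℕ) : ℝ) ≤ p := by
          have : p - 1 ≤ p := by omega
          exact_mod_cast this
        nlinarith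

lemma c0_tendsto : Tendsto (fun p : ℕ => c₀ p / (p : ℝ) ^ 3) atTop (nhds 0) := by
  refine squeeze_zero_norm' (a := fun p : ℕ => 1 / (p : ℝ)) ?_ ?_
  · filter_upwards [eventually_ge_atTop 2] with p hp
    have hp' : (0 : ℝ) < p := by positivity
    rw [Real.norm_eq_abs, abs_div, abs_of_pos (by positivity : (0:ℝ) < (p:ℝ)^3)]
    rw [div_le_div_iff₀ (by positivity) hp']
    have := c0_bound p hp
    calc |c₀ p| * p ≤ (p:ℝ)^2 * p := by
          exact mul_le_mul_of_nonneg_right this hp'.le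
      _ = (p:ℝ)^3 := by ring
      _ = 1 * (p:ℝ)^3 := by ring
  · exact tendsto_one_div_atTop_nhds_zero_nat

theorem c0_growth :
    0 ≤ Filter.liminf (fun p : ℕ => c₀ p / (p : ℝ) ^ 3) Filter.atTop ∧
      Filter.limsup (fun p : ℕ => c₀ p / (p : ℝ) ^ 3) Filter.atTop ≤ 1 / 2 := by
  have h := c0_tendsto
  constructor
  · rw [h.liminf_eq]
  · rw [h.limsup_eq]; norm_num
end

section
/- For every integer p ≥ 1 and every integer k ≥ p + 2, Σ_{j=0}^{1} Σ_{i=0}^{2} (-1)^{i+j}·C(2,i)·(k - jp - i + 1 - (p/2)⌊(k-jp-i)/p⌋)·(⌊(k-jp-i)/p⌋ + 1) = 0. -/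
theorem floor_identity_3 (p : ℕ) (hp : 1 ≤ p) (k : ℕ) (hk : p + 2 ≤ k) :
    (∑ j ∈ Finset.range 2, ∑ i ∈ Finset.range 3,
        (-1) ^ (i + j) * (Nat.choose 2 i : ℚ) *
          (((k - j * p - i : ℕ) : ℚ) + 1 - (p : ℚ) / 2 * (((k - j * p - i) / p : ℕ) : ℚ)) *
            ((((k - j * p - i) / p : ℕ) : ℚ) + 1)) = 0 := by
  obtain ⟨m, rfl⟩ : ∃ m, k = m + (p + 2) := ⟨k - (p + 2), by omega⟩
  have hp0 : 0 < p := hp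
  simp only [Finset.sum_range_succ, Finset.sum_range_zero]
  have e0 : m + (p + 2) - 0 * p - 0 = (m + 2) + p := by omega
  have e1 : m + (p + 2) - 0 * p - 1 = (m + 1) + p := by omega
  have e2 : m + (p + 2) - 0 * p - 2 = m + p := by omega
  have f0 : m + (p + 2) - 1 * p - 0 = m + 2 := by omega
  have f1 : m + (p + 2) - 1 * p - 1 = m + 1 := by omega
  have f2 : m + (p + 2) - 1 * p - 2 = m := by omega
  rw [e0, e1, e2, f0, f1, f2, Nat.add_div_right _ hp0, Nat.add_div_right _ hp0,
    Nat.add_div_right _ hp0]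
  simp only [Nat.choose_zero_right, Nat.choose_one_right, Nat.choose_self]
  push_cast
  ring
end
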